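/- Let H be the support function of an ellipsoid K = L(B) centered at the origin, with dual function H_*(x) = sup{⟨x,y⟩ : H(y)=1}. Then H_*(x) = |L⁻¹x|, and the function u(x) = (r² − H_*(x)²)/(2n) satisfies div(DV(Du)) = −1 on ℝⁿ, where V = (1/2)H². -/

import Mathlib

/-!
Substituting `y = (L⁻¹)† w` turns the constraint `|L† y| = 1` into `|w| = 1` and `⟪x, y⟫` into
`⟪L⁻¹ x, w⟫`, whose supremum over the unit sphere is `|L⁻¹ x|`. Hence `u` and `V` are quadratic
forms: `Du(x) = -(1/n) (L⁻¹)† L⁻¹ x` and `DV(z) = L L† z`, so `DV(Du(x)) = -x / n`, whose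
divergence is `-1`.
-/

open InnerProductSpace ContinuousLinearMap Metric

section InnerProductSpace

variable {E : Type*} [NormedAddCommGroup E] [InnerProductSpace ℝ E]

theorem isGreatest_inner_image_sphere [Nontrivial E] (v : E) :
    IsGreatest ((fun w => ⟪v, w⟫_ℝ) '' sphere 0 1) ‖v‖ := by
  refine ⟨?_, ?_⟩
  · obtain ⟨w, hw, hvw⟩ : ∃ w : E, ‖w‖ = 1 ∧ ⟪v, w⟫_ℝ = ‖v‖ := by
      rcases eq_or_ne v 0 with rfl | hv
      · obtain ⟨w, hw⟩ := exists_norm_eq E zero_le_one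
        exact ⟨w, hw, by simp⟩
      · refine ⟨‖v‖⁻¹ • v, ?_, ?_⟩
        · rw [norm_smul, norm_inv, norm_norm, inv_mul_cancel₀ (norm_ne_zero_iff.2 hv)]
        · rw [real_inner_smul_right, real_inner_self_eq_norm_sq, sq,
            inv_mul_cancel_left₀ (norm_ne_zero_iff.2 hv)]
    exact ⟨w, mem_sphere_zero_iff_norm.2 hw, hvw⟩
  · rintro _ ⟨w, hw, rfl⟩
    simpa [mem_sphere_zero_iff_norm.1 hw] using real_inner_le_norm v w

end InnerProductSpace

section Hilbert

variable {E F : Type*} [NormedAddCommGroup E] [InnerProductSpace ℝ E] [CompleteSpace E]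
  [NormedAddCommGroup F] [InnerProductSpace ℝ F] [CompleteSpace F]

namespace ContinuousLinearEquiv

theorem adjoint_apply_adjoint_symm_apply (L : E ≃L[ℝ] F) (x : E) :
    adjoint (L : E →L[ℝ] F) (adjoint (L.symm : F →L[ℝ] E) x) = x := by
  rw [← comp_apply, ← adjoint_comp, coe_symm_comp_coe, adjoint_id, id_apply]

theorem adjoint_symm_apply_adjoint_apply (L : E ≃L[ℝ] F) (y : F) :
    adjoint (L.symm : F →L[ℝ] E) (adjoint (L : E →L[ℝ] F) y) = y := by
  rw [← comp_apply, ← adjoint_comp, coe_comp_coe_symm, adjoint_id, id_apply]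

theorem image_inner_norm_adjoint_eq_one (L : E ≃L[ℝ] F) (x : F) :
    (fun y => ⟪x, y⟫_ℝ) '' {y | ‖adjoint (L : E →L[ℝ] F) y‖ = 1} =
      (fun w => ⟪L.symm x, w⟫_ℝ) '' sphere 0 1 := by
  ext a
  constructor
  · rintro ⟨y, hy, rfl⟩
    refine ⟨adjoint (L : E →L[ℝ] F) y, mem_sphere_zero_iff_norm.2 hy, ?_⟩
    dsimp only
    rw [adjoint_inner_right, coe_coe, apply_symm_apply]
  · rintro ⟨w, hw, rfl⟩
    refine ⟨adjoint (L.symm : F →L[ℝ] E) w, ?_, ?_⟩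
    · rw [Set.mem_ofPred_eq, adjoint_apply_adjoint_symm_apply, ← mem_sphere_zero_iff_norm]
      exact hw
    · dsimp only
      rw [adjoint_inner_right, coe_coe]

theorem sSup_inner_norm_adjoint_eq_one [Nontrivial E] (L : E ≃L[ℝ] F) (x : F) :
    sSup ((fun y => ⟪x, y⟫_ℝ) '' {y | ‖adjoint (L : E →L[ℝ] F) y‖ = 1}) = ‖L.symm x‖ := by
  rw [image_inner_norm_adjoint_eq_one]
  exact (isGreatest_inner_image_sphere _).csSup_eq

end ContinuousLinearEquiv

theorem gradient_const_add_mul_norm_sq_comp (a c : ℝ) (A : E →L[ℝ] F) :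
    gradient (fun y => a + c * ‖A y‖ ^ 2) = fun x => (2 * c) • adjoint A (A x) := by
  refine gradient_eq fun x => hasGradientAt_iff_hasFDerivAt.2 ?_
  refine ((A.hasFDerivAt.norm_sq.const_mul c).const_add a).congr_fderiv ?_
  ext v
  simp only [FunLike.coe_smul, coe_comp, Pi.smul_apply, Function.comp_apply, toDual_apply_apply,
    innerSL_apply_apply, real_inner_smul_left, adjoint_inner_left, smul_eq_mul]
  ring

end Hilbert

theorem sum_fderiv_const_smul_apply_single {ι : Type*} [Fintype ι] [DecidableEq ι] (c : ℝ)
    (x : EuclideanSpace ℝ ι) :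
    ∑ i, fderiv ℝ (fun y : EuclideanSpace ℝ ι => c • y) x (EuclideanSpace.single i 1) i =
      Fintype.card ι * c := by
  rw [fderiv_fun_const_smul differentiableAt_fun_id, fderiv_fun_id]
  simp

theorem ellipsoid_dual_and_torsion_solution_general {n : ℕ} (hn : 0 < n)
    (L : EuclideanSpace ℝ (Fin n) ≃L[ℝ] EuclideanSpace ℝ (Fin n))
    (H Hs V : EuclideanSpace ℝ (Fin n) → ℝ)
    (hH : ∀ x, H x = ‖ContinuousLinearMap.adjoint
      (L : EuclideanSpace ℝ (Fin n) →L[ℝ] EuclideanSpace ℝ (Fin n)) x‖)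
    (hHs : ∀ x, Hs x = sSup ((fun y => (inner ℝ x y : ℝ)) '' {y | H y = 1}))
    (hV : ∀ x, V x = (1 / 2) * (H x) ^ 2)
    (r : ℝ)
    (u : EuclideanSpace ℝ (Fin n) → ℝ)
    (hu : ∀ x, u x = (r ^ 2 - (Hs x) ^ 2) / (2 * n)) :
    (∀ x, Hs x = ‖L.symm x‖) ∧
    (∀ x : EuclideanSpace ℝ (Fin n),
      ∑ i, (fderiv ℝ (fun y => gradient V (gradient u y)) x
        (EuclideanSpace.single i 1)) i = -1) := by
  have : Nonempty (Fin n) := ⟨⟨0, hn⟩⟩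
  have hHs_eq (x) : Hs x = ‖L.symm x‖ := by
    simpa only [hHs, hH] using L.sSup_inner_norm_adjoint_eq_one x
  refine ⟨hHs_eq, fun x => ?_⟩
  have hu_quad : u = fun y => r ^ 2 / (2 * n) + -(1 / (2 * n)) *
      ‖(L.symm : EuclideanSpace ℝ (Fin n) →L[ℝ] EuclideanSpace ℝ (Fin n)) y‖ ^ 2 := by
    ext y
    rw [hu, hHs_eq, ContinuousLinearEquiv.coe_coe]
    ring
  have hV_quad : V = fun y => 0 + 1 / 2 *
      ‖adjoint (L : EuclideanSpace ℝ (Fin n) →L[ℝ] EuclideanSpace ℝ (Fin n)) y‖ ^ 2 := by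
    ext y
    rw [hV, hH, zero_add]
  have hDV_Du : (fun y => gradient V (gradient u y)) = fun y => -(1 / n : ℝ) • y := by
    ext1 y
    rw [hu_quad, hV_quad, gradient_const_add_mul_norm_sq_comp, gradient_const_add_mul_norm_sq_comp]
    simp only [map_smul, adjoint_adjoint, L.adjoint_apply_adjoint_symm_apply,
      ContinuousLinearEquiv.coe_coe, L.apply_symm_apply, smul_smul]
    congr 1
    ring
  rw [hDV_Du, sum_fderiv_const_smul_apply_single, Fintype.card_fin]
  field_simp

theorem ellipsoid_dual_and_torsion_solution {n : ℕ} (hn : 0 < n)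
    (L : EuclideanSpace ℝ (Fin n) ≃L[ℝ] EuclideanSpace ℝ (Fin n))
    (H Hs V : EuclideanSpace ℝ (Fin n) → ℝ)
    (hH : ∀ x, H x = ‖ContinuousLinearMap.adjoint
      (L : EuclideanSpace ℝ (Fin n) →L[ℝ] EuclideanSpace ℝ (Fin n)) x‖)
    (hHs : ∀ x, Hs x = sSup ((fun y => (inner ℝ x y : ℝ)) '' {y | H y = 1}))
    (hV : ∀ x, V x = (1 / 2) * (H x) ^ 2)
    (r : ℝ) (hr : 0 < r)
    (u : EuclideanSpace ℝ (Fin n) → ℝ)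
    (hu : ∀ x, u x = (r ^ 2 - (Hs x) ^ 2) / (2 * n)) :
    (∀ x, Hs x = ‖L.symm x‖) ∧
    (∀ x : EuclideanSpace ℝ (Fin n),
      ∑ i, (fderiv ℝ (fun y => gradient V (gradient u y)) x
        (EuclideanSpace.single i 1)) i = -1) :=
  ellipsoid_dual_and_torsion_solution_general hn L H Hs V hH hHs hV r u hu
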